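/- arXiv:1812.11956 — 2 statements merged into one kernel-verified Lean document; each statement's English description precedes it below -/
import Mathlib

section
/- For any v ∈ C¹(ℝ⁴ \ K) vanishing at infinity, where K ⊂ ℝ⁴ is compact with smooth boundary, contains the origin, and is star-shaped with respect to the origin, one has ‖v/|x|‖_{L²(ℝ⁴\K)} ≤ C ‖∇v‖_{L²(ℝ⁴\K)} for a constant C independent of v. No boundary vanishing of v is assumed. -/
/-!
Since `K` is star-shaped, each ray `r ↦ r • ω` meets the exterior in a half-line `r > ρ(ω)`.
For `g` vanishing at infinity and `c = (k + 1) / 2`, expanding `0 ≤ ∫ rᵏ (r g' + c g)²` and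
integrating the cross term by parts gives `c² ∫ rᵏ g² ≤ ∫ rᵏ⁺² g'²` up to the boundary term
`-c ρᵏ⁺¹ g(ρ)²`, which has the favourable sign; this is why no boundary condition on `∂K` is needed.
Applied to `g(r) = v(r • ω)`, with `|g'| ≤ |∇v|`, and integrated over `ω` against the polar
Jacobian `rⁿ⁻¹` in dimension `n = k + 3`, this gives `c² ∫_{Kᶜ} v² / |x|² ≤ ∫_{Kᶜ} |∇v|²`;
in `ℝ⁴` the constant is `c = 1`.
-/

open MeasureTheory Set Metric Filter
open scoped ENNReal

theorem integral_le_integral_of_lintegral_ofReal_le {α : Type*} [MeasurableSpace α]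
    {μ : Measure α} {f g : α → ℝ} (hf : 0 ≤ᵐ[μ] f) (hf_meas : AEStronglyMeasurable f μ)
    (hg : 0 ≤ᵐ[μ] g) (hg_int : Integrable g μ)
    (h : ∫⁻ x, ENNReal.ofReal (f x) ∂μ ≤ ∫⁻ x, ENNReal.ofReal (g x) ∂μ) :
    ∫ x, f x ∂μ ≤ ∫ x, g x ∂μ := by
  rw [integral_eq_lintegral_of_nonneg_ae hf hf_meas,
    integral_eq_lintegral_of_nonneg_ae hg hg_int.aestronglyMeasurable]
  exact ENNReal.toReal_mono hg_int.lintegral_lt_top.ne h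

theorem hardy_intervalIntegral (k : ℕ) {g : ℝ → ℝ} (hg : ContDiff ℝ 1 g) {a b : ℝ}
    (ha : 0 ≤ a) (hab : a ≤ b) (hgb : g b = 0) :
    ((k + 1) / 2 : ℝ) ^ 2 * ∫ r in a..b, r ^ k * g r ^ 2 ≤
      ∫ r in a..b, r ^ (k + 2) * deriv g r ^ 2 := by
  set c : ℝ := (k + 1) / 2
  have hgc : Continuous g := hg.continuous
  have hg'c : Continuous (deriv g) := hg.continuous_deriv le_rfl
  have hderiv : ∀ r, HasDerivAt (fun r => r ^ (k + 1) * g r ^ 2)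
      ((k + 1) * r ^ k * g r ^ 2 + r ^ (k + 1) * (2 * g r * deriv g r)) r := fun r => by
    refine ((hasDerivAt_pow (k + 1) r).fun_mul
      ((hg.differentiable one_ne_zero r).hasDerivAt.fun_pow 2)).congr_deriv ?_
    push_cast
    ring
  have hsquare : ∀ r, r ^ k * (r * deriv g r + c * g r) ^ 2 = r ^ (k + 2) * deriv g r ^ 2
      + c * ((k + 1) * r ^ k * g r ^ 2 + r ^ (k + 1) * (2 * g r * deriv g r))
      - c ^ 2 * (r ^ k * g r ^ 2) := fun r => by
    simp only [c]
    ring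
  have hboundary := intervalIntegral.integral_eq_sub_of_hasDerivAt (fun r _ => hderiv r)
    ((by fun_prop : Continuous _).intervalIntegrable a b)
  have hnonneg : 0 ≤ ∫ r in a..b, r ^ k * (r * deriv g r + c * g r) ^ 2 :=
    intervalIntegral.integral_nonneg hab fun r hr => by
      have := ha.trans hr.1
      positivity
  simp_rw [hsquare] at hnonneg
  rw [intervalIntegral.integral_sub, intervalIntegral.integral_add,
    intervalIntegral.integral_const_mul, intervalIntegral.integral_const_mul, hboundary, hgb]
    at hnonneg
  · nlinarith [show 0 ≤ c * (a ^ (k + 1) * g a ^ 2) by positivity]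
  all_goals exact (by fun_prop : Continuous _).intervalIntegrable a b

theorem ofReal_intervalIntegral_eq_setLIntegral_Ioc {f : ℝ → ℝ} {a b : ℝ} (hab : a ≤ b)
    (hf : IntervalIntegrable f volume a b) (hf_nonneg : ∀ x ∈ Ioc a b, 0 ≤ f x) :
    ENNReal.ofReal (∫ x in a..b, f x) = ∫⁻ x in Ioc a b, ENNReal.ofReal (f x) := by
  rw [intervalIntegral.integral_of_le hab]
  exact ofReal_integral_eq_lintegral_ofReal hf.1
    ((ae_restrict_iff' measurableSet_Ioc).2 (Eventually.of_forall hf_nonneg))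

theorem hardy_lintegral_Ioi (k : ℕ) {g : ℝ → ℝ} (hg : ContDiff ℝ 1 g)
    (hg_zero : ∀ᶠ r in atTop, g r = 0) {a : ℝ} (ha : 0 ≤ a) :
    ∫⁻ r in Ioi a, ENNReal.ofReal (((k + 1) / 2) ^ 2 * (r ^ k * g r ^ 2)) ≤
      ∫⁻ r in Ioi a, ENNReal.ofReal (r ^ (k + 2) * deriv g r ^ 2) := by
  obtain ⟨b, hgb⟩ := (hg_zero.and (eventually_ge_atTop a)).exists_forall_of_atTop
  have hab : a ≤ b := (hgb b le_rfl).2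
  have hgc : Continuous g := hg.continuous
  have hg'c : Continuous (deriv g) := hg.continuous_deriv le_rfl
  have hnonneg : ∀ r ∈ Ioc a b, 0 ≤ r := fun r hr => ha.trans hr.1.le
  calc ∫⁻ r in Ioi a, ENNReal.ofReal (((k + 1) / 2) ^ 2 * (r ^ k * g r ^ 2))
      = ∫⁻ r in Ioc a b, ENNReal.ofReal (((k + 1) / 2) ^ 2 * (r ^ k * g r ^ 2)) := by
        rw [← Ioc_union_Ioi_eq_Ioi hab, lintegral_union measurableSet_Ioi Ioc_disjoint_Ioi_same,
          setLIntegral_congr_fun (g := 0) measurableSet_Ioi fun r hr => by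
            simp [(hgb r hr.le).1],
          lintegral_zero_fun, add_zero]
    _ = ENNReal.ofReal (((k + 1) / 2) ^ 2 * ∫ r in a..b, r ^ k * g r ^ 2) := by
        rw [← intervalIntegral.integral_const_mul, ofReal_intervalIntegral_eq_setLIntegral_Ioc hab
          ((by fun_prop : Continuous _).intervalIntegrable a b)
          fun r hr => by have := hnonneg r hr; positivity]
    _ ≤ ENNReal.ofReal (∫ r in a..b, r ^ (k + 2) * deriv g r ^ 2) :=
        ENNReal.ofReal_le_ofReal (hardy_intervalIntegral k hg ha hab (hgb b le_rfl).1)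
    _ = ∫⁻ r in Ioc a b, ENNReal.ofReal (r ^ (k + 2) * deriv g r ^ 2) :=
        ofReal_intervalIntegral_eq_setLIntegral_Ioc hab
          ((by fun_prop : Continuous _).intervalIntegrable a b)
          fun r hr => by have := hnonneg r hr; positivity
    _ ≤ ∫⁻ r in Ioi a, ENNReal.ofReal (r ^ (k + 2) * deriv g r ^ 2) :=
        lintegral_mono_set Ioc_subset_Ioi_self

section NormedSpace

variable {E : Type*} [NormedAddCommGroup E] [NormedSpace ℝ E]

theorem lintegral_eq_lintegral_toSphere_lintegral_Ioi [FiniteDimensional ℝ E]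
    [MeasurableSpace E] [BorelSpace E] [Nontrivial E] (μ : Measure E) [μ.IsAddHaarMeasure]
    {F : E → ℝ≥0∞} (hF : Measurable F) :
    ∫⁻ x, F x ∂μ = ∫⁻ ω : sphere (0 : E) 1, ∫⁻ r in Ioi (0 : ℝ),
      ENNReal.ofReal (r ^ (Module.finrank ℝ E - 1)) * F (r • (ω : E)) ∂volume ∂μ.toSphere := by
  set G : sphere (0 : E) 1 × Ioi (0 : ℝ) → ℝ≥0∞ := fun p => F (p.2.1 • (p.1 : E))
  have hG : Measurable G := by fun_prop
  have hGF : ∀ x : ({0}ᶜ : Set E), G (homeomorphUnitSphereProd E x) = F x := fun x => by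
    simp [G, smul_smul, mul_inv_cancel₀ (norm_ne_zero_iff.2 x.2)]
  calc ∫⁻ x, F x ∂μ = ∫⁻ x : ({0}ᶜ : Set E), G (homeomorphUnitSphereProd E x) ∂μ.comap (↑) := by
        simp only [hGF]
        rw [lintegral_subtype_comap (measurableSet_singleton 0).compl, restrict_compl_singleton]
    _ = ∫⁻ ω, ∫⁻ r, G (ω, r) ∂Measure.volumeIoiPow (Module.finrank ℝ E - 1) ∂μ.toSphere := by
        rw [(Measure.measurePreserving_homeomorphUnitSphereProd μ).lintegral_comp hG,
          lintegral_prod _ hG.aemeasurable]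
  refine lintegral_congr fun ω => ?_
  rw [Measure.volumeIoiPow, lintegral_withDensity_eq_lintegral_mul _ (by fun_prop) (by fun_prop)]
  exact lintegral_subtype_comap measurableSet_Ioi
    (fun r : ℝ => ENNReal.ofReal (r ^ (Module.finrank ℝ E - 1)) * F (r • (ω : E)))

theorem StarConvex.exists_smul_mem_iff_le {K : Set E} (hstar : StarConvex ℝ 0 K)
    (hK : IsCompact K) (h0 : (0 : E) ∈ K) {ω : E} (hω : ω ≠ 0) :
    ∃ ρ : ℝ, 0 ≤ ρ ∧ ∀ r : ℝ, 0 < r → (r • ω ∈ K ↔ r ≤ ρ) := by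
  have h0' : (0 : ℝ) ∈ (· • ω) ⁻¹' K := by simpa using h0
  obtain ⟨ρ, hρK, hρmax⟩ :=
    ((isClosedEmbedding_smul_left (𝕜 := ℝ) hω).isCompact_preimage hK).exists_isGreatest ⟨0, h0'⟩
  refine ⟨ρ, hρmax h0', fun r hr => ⟨fun hrK => hρmax hrK, fun hrρ => ?_⟩⟩
  have hρ : 0 < ρ := hr.trans_le hrρ
  simpa [smul_smul, div_mul_cancel₀ r hρ.ne'] using
    hstar.smul_mem hρK (div_nonneg hr.le hρ.le) ((div_le_one hρ).2 hrρ)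

theorem HasCompactSupport.eventually_apply_smul_eq_zero {F : Type*} [Zero F] {v : E → F}
    (hv : HasCompactSupport v) {ω : E} (hω : ω ≠ 0) : ∀ᶠ r : ℝ in atTop, v (r • ω) = 0 :=
  ((isClosedEmbedding_smul_left hω).tendsto_cocompact.mono_left atTop_le_cocompact).eventually
    hv.isCompact.compl_mem_cocompact |>.mono fun _ => image_eq_zero_of_notMem_tsupport

theorem norm_deriv_apply_smul_le {F : Type*} [NormedAddCommGroup F] [NormedSpace ℝ F]
    {v : E → F} (hv : Differentiable ℝ v) (ω : E) (r : ℝ) :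
    ‖deriv (fun r : ℝ => v (r • ω)) r‖ ≤ ‖fderiv ℝ v (r • ω)‖ * ‖ω‖ := by
  have hline : HasDerivAt (fun r : ℝ => r • ω) ω r := by
    simpa using (hasDerivAt_id r).smul_const ω
  have hcomp : HasDerivAt (fun r : ℝ => v (r • ω)) (fderiv ℝ v (r • ω) ω) r :=
    (hv _).hasFDerivAt.comp_hasDerivAt r hline
  rw [hcomp.deriv]
  exact (fderiv ℝ v (r • ω)).le_opNorm ω

theorem setLIntegral_Ioi_mul_indicator_compl_smul {K : Set E} {ω : E} {ρ : ℝ} (hρ : 0 ≤ ρ)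
    (hK : ∀ r : ℝ, 0 < r → (r • ω ∈ K ↔ r ≤ ρ)) (h : ℝ → ℝ≥0∞) (F : E → ℝ≥0∞) :
    ∫⁻ r in Ioi 0, h r * Kᶜ.indicator F (r • ω) = ∫⁻ r in Ioi ρ, h r * F (r • ω) := by
  have hind : EqOn (fun r => h r * Kᶜ.indicator F (r • ω))
      ((Ioi ρ).indicator fun r => h r * F (r • ω)) (Ioi 0) := fun r hr => by
    by_cases hrρ : r ≤ ρ
    · simp [(hK r hr).2 hrρ, hrρ]
    · simp [(hK r hr).not.2 hrρ, lt_of_not_ge hrρ]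
  rw [setLIntegral_congr_fun measurableSet_Ioi hind, lintegral_indicator measurableSet_Ioi,
    Measure.restrict_restrict measurableSet_Ioi, inter_eq_left.2 (Ioi_subset_Ioi hρ)]

theorem hardy_lintegral_ray {K : Set E} {ω : E} (hω : ‖ω‖ = 1) {ρ : ℝ} (hρ : 0 ≤ ρ)
    (hK : ∀ r : ℝ, 0 < r → (r • ω ∈ K ↔ r ≤ ρ)) (k : ℕ) {v : E → ℝ} (hv : ContDiff ℝ 1 v)
    (hsupp : HasCompactSupport v) :
    ∫⁻ r in Ioi 0, ENNReal.ofReal (r ^ (k + 2)) *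
        Kᶜ.indicator (fun x => ENNReal.ofReal (((k + 1) / 2) ^ 2 * (v x / ‖x‖) ^ 2)) (r • ω) ≤
      ∫⁻ r in Ioi 0, ENNReal.ofReal (r ^ (k + 2)) *
        Kᶜ.indicator (fun x => ENNReal.ofReal (‖fderiv ℝ v x‖ ^ 2)) (r • ω) := by
  set g : ℝ → ℝ := fun r => v (r • ω)
  have hg : ContDiff ℝ 1 g := hv.comp (contDiff_id.smul contDiff_const)
  have hω0 : ω ≠ 0 := norm_ne_zero_iff.1 (hω.symm ▸ one_ne_zero)
  rw [setLIntegral_Ioi_mul_indicator_compl_smul hρ hK,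
    setLIntegral_Ioi_mul_indicator_compl_smul hρ hK]
  calc ∫⁻ r in Ioi ρ, ENNReal.ofReal (r ^ (k + 2)) *
        ENNReal.ofReal (((k + 1) / 2) ^ 2 * (v (r • ω) / ‖r • ω‖) ^ 2)
      = ∫⁻ r in Ioi ρ, ENNReal.ofReal (((k + 1) / 2) ^ 2 * (r ^ k * g r ^ 2)) := by
        refine setLIntegral_congr_fun measurableSet_Ioi fun r hr => ?_
        have hr : 0 < r := hρ.trans_lt hr
        rw [← ENNReal.ofReal_mul (by positivity), norm_smul, hω, mul_one,
          Real.norm_of_nonneg hr.le]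
        congr 1
        field_simp
        ring
    _ ≤ ∫⁻ r in Ioi ρ, ENNReal.ofReal (r ^ (k + 2) * deriv g r ^ 2) :=
        hardy_lintegral_Ioi k hg (hsupp.eventually_apply_smul_eq_zero hω0) hρ
    _ ≤ ∫⁻ r in Ioi ρ, ENNReal.ofReal (r ^ (k + 2)) *
        ENNReal.ofReal (‖fderiv ℝ v (r • ω)‖ ^ 2) := by
        refine setLIntegral_mono' measurableSet_Ioi fun r hr => ?_
        have hr : 0 < r := hρ.trans_lt hr
        have hderiv := norm_deriv_apply_smul_le (hv.differentiable one_ne_zero) ω r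
        rw [hω, mul_one, Real.norm_eq_abs] at hderiv
        rw [← ENNReal.ofReal_mul (by positivity)]
        exact ENNReal.ofReal_le_ofReal (mul_le_mul_of_nonneg_left
          (sq_le_sq' (abs_le.1 hderiv).1 (abs_le.1 hderiv).2) (by positivity))

theorem hardy_lintegral_compl_of_starConvex [FiniteDimensional ℝ E] [MeasurableSpace E]
    [BorelSpace E] (μ : Measure E) [μ.IsAddHaarMeasure] {k : ℕ}
    (hE : Module.finrank ℝ E = k + 3) {K : Set E} (hK : IsCompact K) (h0 : (0 : E) ∈ K)
    (hstar : StarConvex ℝ 0 K) {v : E → ℝ} (hv : ContDiff ℝ 1 v) (hsupp : HasCompactSupport v) :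
    ∫⁻ x in Kᶜ, ENNReal.ofReal (((k + 1) / 2) ^ 2 * (v x / ‖x‖) ^ 2) ∂μ ≤
      ∫⁻ x in Kᶜ, ENNReal.ofReal (‖fderiv ℝ v x‖ ^ 2) ∂μ := by
  have : Nontrivial E := Module.nontrivial_of_finrank_pos (R := ℝ) (by omega)
  have hKc : MeasurableSet Kᶜ := hK.isClosed.measurableSet.compl
  have hvc : Continuous v := hv.continuous
  have hv'c : Continuous (fderiv ℝ v) := hv.continuous_fderiv one_ne_zero
  rw [← lintegral_indicator hKc, ← lintegral_indicator hKc,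
    lintegral_eq_lintegral_toSphere_lintegral_Ioi μ (by fun_prop),
    lintegral_eq_lintegral_toSphere_lintegral_Ioi μ (by fun_prop), hE]
  refine lintegral_mono fun ω => ?_
  obtain ⟨ρ, hρ, hKρ⟩ := hstar.exists_smul_mem_iff_le hK h0 (ne_zero_of_mem_unit_sphere ω)
  exact hardy_lintegral_ray (norm_eq_of_mem_sphere ω) hρ hKρ k hv hsupp

end NormedSpace

/-- Hardy inequality on the exterior of a compact star-shaped obstacle in ℝ⁴:
no boundary vanishing of `v` is assumed. -/
theorem hardy_exterior (K : Set (EuclideanSpace ℝ (Fin 4)))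
    (hK : IsCompact K) (h0 : (0 : EuclideanSpace ℝ (Fin 4)) ∈ K)
    (hstar : ∀ x ∈ K, ∀ t : ℝ, t ∈ Set.Icc (0:ℝ) 1 → t • x ∈ K) :
    ∃ C : ℝ, 0 < C ∧ ∀ v : EuclideanSpace ℝ (Fin 4) → ℝ,
      ContDiff ℝ 1 v → HasCompactSupport v →
      Real.sqrt (∫ x in Kᶜ, (v x / ‖x‖) ^ 2) ≤
        C * Real.sqrt (∫ x in Kᶜ, ‖gradient v x‖ ^ 2) := by
  refine ⟨1, one_pos, fun v hv hsupp => ?_⟩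
  have hstar' : StarConvex ℝ 0 K :=
    starConvex_zero_iff.2 fun x hx t ht₀ ht₁ => hstar x hx t ⟨ht₀, ht₁⟩
  have hardy := hardy_lintegral_compl_of_starConvex (E := EuclideanSpace ℝ (Fin 4)) volume
    (k := 1) finrank_euclideanSpace_fin hK h0 hstar' hv hsupp
  simp only [Nat.cast_one, one_add_one_eq_two, div_self (two_ne_zero' ℝ), one_pow, one_mul] at hardy
  have hgradient : ∀ x, ‖gradient v x‖ = ‖fderiv ℝ v x‖ := fun x =>
    (InnerProductSpace.toDual ℝ _).symm.norm_map _
  have hv'c : Continuous (fderiv ℝ v) := hv.continuous_fderiv one_ne_zero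
  have hint : Integrable fun x => ‖fderiv ℝ v x‖ ^ 2 :=
    (by fun_prop : Continuous _).integrable_of_hasCompactSupport
      ((hsupp.fderiv (𝕜 := ℝ)).comp_left (g := fun L => ‖L‖ ^ 2) (by simp))
  simp only [hgradient, one_mul]
  exact Real.sqrt_le_sqrt <| integral_le_integral_of_lintegral_ofReal_le
    (Eventually.of_forall fun _ => sq_nonneg _)
    ((hv.continuous.measurable.div measurable_norm).pow_const 2).aestronglyMeasurable
    (Eventually.of_forall fun _ => sq_nonneg _) hint.integrableOn hardy
end

section
/- Let v be a C¹ function on ℝ × ℝⁿ, let S = t∂_t + r∂_r be the scaling vector field, and let c > 0. Then for all (t,x) with r = |x| < c t, the pointwise inequality |∇_x v|² ≤ (ct−r)⁻² (Sv)² + (1/c)·(t/(ct−r))·( c²|∇_x v|² − (∂_t v)² ) holds. -/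
/-- Algebraic core of the cone inequality. -/
theorem cone_ineq_alg (a D G r t c : ℝ) (hr : 0 < r) (hc : 0 < c)
    (hcone : r < c * t) (hCS : D ^ 2 ≤ r ^ 2 * G) :
    G ≤ ((c * t - r) ^ 2)⁻¹ * (t * a + D) ^ 2
        + (1 / c) * (t / (c * t - r)) * (c ^ 2 * G - a ^ 2) := by
  have ht : 0 < t := by nlinarith
  have hct : 0 < c * t - r := by linarith
  have hnum : 0 ≤ c * (t * a + D) ^ 2 + t * (c * t - r) * (c ^ 2 * G - a ^ 2)
      - c * (c * t - r) ^ 2 * G := by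
    nlinarith [mul_pos (mul_pos (pow_pos hr 2) ht) hct,
      mul_nonneg (le_of_lt (by positivity : (0:ℝ) < c * r * t * (c * t - r)))
        (sub_nonneg.mpr hCS),
      mul_nonneg (mul_nonneg hr.le (sq_nonneg t)) (sq_nonneg (r * a + c * D)),
      mul_pos (mul_pos (pow_pos hr 2) ht) (mul_pos hc ht)]
  have hden : 0 < c * (c * t - r) ^ 2 := by positivity
  rw [← sub_nonneg]
  have heq : ((c * t - r) ^ 2)⁻¹ * (t * a + D) ^ 2
        + (1 / c) * (t / (c * t - r)) * (c ^ 2 * G - a ^ 2) - G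
      = (c * (t * a + D) ^ 2 + t * (c * t - r) * (c ^ 2 * G - a ^ 2)
          - c * (c * t - r) ^ 2 * G) / (c * (c * t - r) ^ 2) := by
    field_simp
  rw [heq]
  exact div_nonneg hnum hden.le

/-- Pointwise inequality inside the light cone:
`|∇ₓv|² ≤ (ct−r)⁻²(Sv)² + (1/c)(t/(ct−r))(c²|∇ₓv|² − (∂ₜv)²)` for `0 < r < ct`. -/
theorem pointwise_cone_ineq (n : ℕ) (hn : 1 ≤ n)
    (v : ℝ × EuclideanSpace ℝ (Fin n) → ℝ) (hv : ContDiff ℝ 1 v)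
    (c : ℝ) (hc : 0 < c) (t : ℝ) (x : EuclideanSpace ℝ (Fin n))
    (hx : 0 < ‖x‖) (hcone : ‖x‖ < c * t) :
    (∑ i : Fin n, (fderiv ℝ v (t, x) (0, EuclideanSpace.single i 1)) ^ 2)
      ≤ ((c * t - ‖x‖) ^ 2)⁻¹ *
          (t * fderiv ℝ v (t, x) (1, 0)
            + ∑ i : Fin n, x i * fderiv ℝ v (t, x) (0, EuclideanSpace.single i 1)) ^ 2
        + (1 / c) * (t / (c * t - ‖x‖)) *
            (c ^ 2 * ∑ i : Fin n, (fderiv ℝ v (t, x) (0, EuclideanSpace.single i 1)) ^ 2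
              - (fderiv ℝ v (t, x) (1, 0)) ^ 2) := by
  set g : Fin n → ℝ := fun i => fderiv ℝ v (t, x) (0, EuclideanSpace.single i 1) with hg
  have hnorm : ‖x‖ ^ 2 = ∑ i : Fin n, (x i) ^ 2 := by
    rw [EuclideanSpace.norm_eq]
    rw [Real.sq_sqrt (by positivity)]
    simp [Real.norm_eq_abs, sq_abs]
  have hCS : (∑ i : Fin n, x i * g i) ^ 2 ≤ ‖x‖ ^ 2 * ∑ i : Fin n, (g i) ^ 2 := by
    rw [hnorm]
    exact Finset.sum_mul_sq_le_sq_mul_sq _ _ _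
  exact cone_ineq_alg (fderiv ℝ v (t, x) (1, 0)) (∑ i : Fin n, x i * g i)
    (∑ i : Fin n, (g i) ^ 2) ‖x‖ t c hx hc hcone hCS
end
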